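/- arXiv:1809.01695 — 2 statements merged into one kernel-verified Lean document; each statement's English description precedes it below -/
import Mathlib

section
/- Let B be a bounded selfadjoint operator on a complex Hilbert space H. Then B is S-weakly complementable for every closed subspace S of H if and only if B is semidefinite (i.e., B is positive or −B is positive). -/
/-!
If `B ≥ 0`, write `B = C²` and `T = P_S C`. Then `a = T T⋆` and `b = T (C (1 - P_S))`, so
`range b ⊆ range T ⊆ range (T T⋆)^{1/2} = range |a|^{1/2}`, the middle inclusion being Douglas'
lemma (`‖T⋆ w‖ = ‖(T T⋆)^{1/2} w‖`). The case `-B ≥ 0` follows because the corners of `-B`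
are `-a` and `-b`.

If `B` is indefinite, the intermediate value theorem on a segment from a `B`-positive to a
`B`-negative vector yields `e` with `⟪B e, e⟫ = 0` and `B e ≠ 0`. For `S = ℂ e` the corner `a`
vanishes, so `|a|^{1/2} = 0`, which forces `b = 0`, whereas `b⋆ e = (1 - P_S) B e = B e ≠ 0`.
-/

open ContinuousLinearMap

noncomputable section

variable {H : Type*} [NormedAddCommGroup H] [InnerProductSpace ℂ H] [CompleteSpace H]

/-- The orthogonal projection onto a closed subspace `S`, as an endomorphism of `H`. -/
def projL (S : Submodule ℂ H) [Submodule.HasOrthogonalProjection S] : H →L[ℂ] H :=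
  S.subtypeL.comp (Submodule.orthogonalProjectionOnto S)

/-- The corner `a = P_S B P_S` of the block decomposition of `B` w.r.t. `H = S ⊕ Sᗮ`. -/
def blockA (B : H →L[ℂ] H) (S : Submodule ℂ H) [Submodule.HasOrthogonalProjection S] : H →L[ℂ] H :=
  projL S * B * projL S

/-- The corner `b = P_S B P_{Sᗮ}` of the block decomposition of `B` w.r.t. `H = S ⊕ Sᗮ`. -/
def blockB (B : H →L[ℂ] H) (S : Submodule ℂ H) [Submodule.HasOrthogonalProjection S] : H →L[ℂ] H :=
  projL S * B * (1 - projL S)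

/-- The corner `c = P_{Sᗮ} B P_{Sᗮ}` of the block decomposition of `B` w.r.t. `H = S ⊕ Sᗮ`. -/
def blockC (B : H →L[ℂ] H) (S : Submodule ℂ H) [Submodule.HasOrthogonalProjection S] : H →L[ℂ] H :=
  (1 - projL S) * B * (1 - projL S)

/-- `m = |a|^{1/2}`: `m` is the (unique) positive fourth root of `a⋆ a`. -/
def IsSqrtAbs (a m : H →L[ℂ] H) : Prop :=
  m.IsPositive ∧ m ^ 4 = adjoint a * a

/-- `B` is `S`-weakly complementable: `range b ⊆ range |a|^{1/2}`. -/
def IsWeaklyComplementable (B : H →L[ℂ] H) (S : Submodule ℂ H)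
    [Submodule.HasOrthogonalProjection S] : Prop :=
  ∃ m : H →L[ℂ] H, IsSqrtAbs (blockA B S) m ∧
    LinearMap.range (blockB B S : H →ₗ[ℂ] H) ≤ LinearMap.range (m : H →ₗ[ℂ] H)

/-- `B` is `S`-complementable: `H = S + B⁻¹(Sᗮ)`. -/
def IsComplementable (B : H →L[ℂ] H) (S : Submodule ℂ H) : Prop :=
  S ⊔ Sᗮ.comap (B : H →ₗ[ℂ] H) = ⊤

/-- The set `P(B,S)` of `B`-selfadjoint bounded idempotents onto `S`. -/
def projSet (B : H →L[ℂ] H) (S : Submodule ℂ H) : Set (H →L[ℂ] H) :=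
  {Q | Q * Q = Q ∧ LinearMap.range (Q : H →ₗ[ℂ] H) = S ∧ B * Q = adjoint Q * B}

/-- `Y` is the Schur complement `B_{/S} = [[0,0],[0, c - f⋆ u f]]`, where `f` is the reduced
solution of `b = |a|^{1/2} x` and `a = u |a|` is the polar decomposition of `a`. -/
def IsSchur (B : H →L[ℂ] H) (S : Submodule ℂ H) [Submodule.HasOrthogonalProjection S]
    (Y : H →L[ℂ] H) : Prop :=
  ∃ m u f : H →L[ℂ] H,
    IsSqrtAbs (blockA B S) m ∧
    LinearMap.ker (u : H →ₗ[ℂ] H) = LinearMap.ker (blockA B S : H →ₗ[ℂ] H) ∧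
    (∀ x ∈ (LinearMap.ker (blockA B S : H →ₗ[ℂ] H))ᗮ, ‖u x‖ = ‖x‖) ∧
    blockA B S = u * m ^ 2 ∧
    m * f = blockB B S ∧
    LinearMap.range (f : H →ₗ[ℂ] H) ≤ (LinearMap.range (m : H →ₗ[ℂ] H)).topologicalClosure ∧
    Y = blockC B S - adjoint f * (u * f)

/-- The set `M⁻(B,T)`. -/
def Mminus (B : H →L[ℂ] H) (T : Submodule ℂ H) : Set (H →L[ℂ] H) :=
  {X | IsSelfAdjoint X ∧ (B - X).IsPositive ∧ LinearMap.range (X : H →ₗ[ℂ] H) ≤ T}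

/-- The set `M⁺(B,T)`. -/
def Mplus (B : H →L[ℂ] H) (T : Submodule ℂ H) : Set (H →L[ℂ] H) :=
  {X | IsSelfAdjoint X ∧ (X - B).IsPositive ∧ LinearMap.range (X : H →ₗ[ℂ] H) ≤ T}

/-- `Y` is the Loewner maximum of `M`. -/
def IsMaxOf (M : Set (H →L[ℂ] H)) (Y : H →L[ℂ] H) : Prop :=
  Y ∈ M ∧ ∀ X ∈ M, (Y - X).IsPositive

/-- `Z` is the Loewner minimum of `M`. -/
def IsMinOf (M : Set (H →L[ℂ] H)) (Z : H →L[ℂ] H) : Prop :=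
  Z ∈ M ∧ ∀ X ∈ M, (X - Z).IsPositive

/-- `Z` is the greatest lower bound of `M` in the Loewner order on selfadjoint operators. -/
def IsGLBOf (M : Set (H →L[ℂ] H)) (Z : H →L[ℂ] H) : Prop :=
  IsSelfAdjoint Z ∧ (∀ X ∈ M, (X - Z).IsPositive) ∧
    ∀ F : H →L[ℂ] H, IsSelfAdjoint F → (∀ X ∈ M, (X - F).IsPositive) → (Z - F).IsPositive

/-- `Y` is the least upper bound of `M` in the Loewner order on selfadjoint operators. -/
def IsLUBOf (M : Set (H →L[ℂ] H)) (Y : H →L[ℂ] H) : Prop :=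
  IsSelfAdjoint Y ∧ (∀ X ∈ M, (Y - X).IsPositive) ∧
    ∀ F : H →L[ℂ] H, IsSelfAdjoint F → (∀ X ∈ M, (F - X).IsPositive) → (F - Y).IsPositive

/-- A decomposition `S = S₊ ⊕_B S₋` into a `B`-nonnegative and a `B`-nonpositive part. -/
def IsWDecomp (B : H →L[ℂ] H) (S Sp Sm : Submodule ℂ H) : Prop :=
  (∀ x ∈ Sp, ∀ y ∈ Sm, (inner ℂ x y : ℂ) = 0) ∧
  Sp ⊔ Sm = S ∧
  (∀ x ∈ Sp, 0 ≤ (inner ℂ (B x) x : ℂ).re) ∧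
  (∀ x ∈ Sm, (inner ℂ (B x) x : ℂ).re ≤ 0) ∧
  (∀ x ∈ Sp, ∀ y ∈ Sm, (inner ℂ (B x) y : ℂ) = 0)

/-- `Y` is Krein's shorted operator `B_{/T}` of the positive operator `B` to `T`:
the Loewner maximum of `{X : 0 ≤ X ≤ B, range X ⊆ Tᗮ}`. -/
def IsShort (B : H →L[ℂ] H) (T : Submodule ℂ H) (Y : H →L[ℂ] H) : Prop :=
  (Y.IsPositive ∧ (B - Y).IsPositive ∧ LinearMap.range (Y : H →ₗ[ℂ] H) ≤ Tᗮ) ∧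
    ∀ X : H →L[ℂ] H, X.IsPositive → (B - X).IsPositive → LinearMap.range (X : H →ₗ[ℂ] H) ≤ Tᗮ →
      (Y - X).IsPositive

/-- The set `{R⋆ Q⋆ B Q R : Q² = Q, N(Q) = T}`. -/
def comprSet2 (B R : H →L[ℂ] H) (T : Submodule ℂ H) : Set (H →L[ℂ] H) :=
  {X | ∃ Q : H →L[ℂ] H, Q * Q = Q ∧ LinearMap.ker (Q : H →ₗ[ℂ] H) = T ∧
    X = adjoint R * (adjoint Q * B * Q) * R}

/-- The set `{Q⋆ B Q : Q² = Q, N(Q) = S}`. -/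
def comprSet1 (B : H →L[ℂ] H) (S : Submodule ℂ H) : Set (H →L[ℂ] H) :=
  {X | ∃ Q : H →L[ℂ] H, Q * Q = Q ∧ LinearMap.ker (Q : H →ₗ[ℂ] H) = S ∧ X = adjoint Q * B * Q}

/-- The set `N⁻(W,T)` of the Krein space `(H, [x,y] = ⟨Jx,y⟩)`. -/
def Nminus (J W : H →L[ℂ] H) (T : Submodule ℂ H) : Set (H →L[ℂ] H) :=
  {X | IsSelfAdjoint (J * X) ∧ (J * (W - X)).IsPositive ∧ LinearMap.range (X : H →ₗ[ℂ] H) ≤ T}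

/-- The set `N⁺(W,T)` of the Krein space `(H, [x,y] = ⟨Jx,y⟩)`. -/
def Nplus (J W : H →L[ℂ] H) (T : Submodule ℂ H) : Set (H →L[ℂ] H) :=
  {X | IsSelfAdjoint (J * X) ∧ (J * (X - W)).IsPositive ∧ LinearMap.range (X : H →ₗ[ℂ] H) ≤ T}

/-- `Y` is the maximum of `M` in the Krein order induced by `J`. -/
def KMaxOf (J : H →L[ℂ] H) (M : Set (H →L[ℂ] H)) (Y : H →L[ℂ] H) : Prop :=
  Y ∈ M ∧ ∀ X ∈ M, (J * (Y - X)).IsPositive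

/-- `Z` is the minimum of `M` in the Krein order induced by `J`. -/
def KMinOf (J : H →L[ℂ] H) (M : Set (H →L[ℂ] H)) (Z : H →L[ℂ] H) : Prop :=
  Z ∈ M ∧ ∀ X ∈ M, (J * (X - Z)).IsPositive

/-- `E` is a densely defined projection (idempotent) with kernel `N`. -/
def IsDDProj (N : Submodule ℂ H) (E : H →ₗ.[ℂ] H) : Prop :=
  Dense (E.domain : Set H) ∧
  (∃ h : ∀ x : E.domain, E x ∈ E.domain, ∀ x : E.domain, E ⟨E x, h x⟩ = E x) ∧
  (LinearMap.ker E.toFun).map E.domain.subtype = N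

/-- `G` is the (everywhere defined, bounded) composition `E ∘ T`; in particular
`range T ⊆ dom E`. -/
def IsBddComp (E : H →ₗ.[ℂ] H) (T G : H →L[ℂ] H) : Prop :=
  ∃ h : ∀ x : H, T x ∈ E.domain, ∀ x : H, G x = E ⟨T x, h x⟩

theorem IsSelfAdjoint.eq_zero_of_pow_two_pow_eq_zero {A : Type*} [NormedRing A] [StarRing A]
    [CStarRing A] {a : A} (ha : IsSelfAdjoint a) (n : ℕ) (h : a ^ 2 ^ n = 0) : a = 0 := by
  have := ha.norm_pow_two_pow n
  rw [h, norm_zero, eq_comm, pow_eq_zero_iff (by positivity)] at this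
  exact norm_eq_zero.mp this

/-- Douglas' lemma. -/
theorem ContinuousLinearMap.range_le_range_of_norm_adjoint_apply_le {𝕜 E F : Type*} [RCLike 𝕜]
    [NormedAddCommGroup E] [InnerProductSpace 𝕜 E] [CompleteSpace E]
    [NormedAddCommGroup F] [InnerProductSpace 𝕜 F] [CompleteSpace F]
    {T A : E →L[𝕜] F} (C : ℝ) (h : ∀ w, ‖adjoint T w‖ ≤ C * ‖adjoint A w‖) :
    LinearMap.range (T : E →ₗ[𝕜] F) ≤ LinearMap.range (A : E →ₗ[𝕜] F) := by
  -- `V := T⋆ (A⋆)⁻¹` is bounded on `range A⋆`; extend it to the closure `K` and by `0` on `Kᗮ`.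
  -- Then `V A⋆ = T⋆`, i.e. `T = A V⋆`.
  set K := (LinearMap.range (adjoint A : F →ₗ[𝕜] E)).topologicalClosure
  have hK : ∀ w, adjoint A w ∈ K := fun w =>
    Submodule.le_topologicalClosure _ (LinearMap.mem_range_self _ w)
  let e : F →ₗ[𝕜] K := (adjoint A : F →ₗ[𝕜] E).codRestrict K hK
  have he : DenseRange e := by
    rw [DenseRange, Topology.IsInducing.subtypeVal.dense_iff]
    rintro ⟨x, hx⟩
    rw [← Set.range_comp]
    change x ∈ closure (Set.range (adjoint A))
    rwa [← coe_coe, ← LinearMap.coe_range, ← Submodule.topologicalClosure_coe]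
  let V : E →L[𝕜] E :=
    ((adjoint T : F →ₗ[𝕜] E).extendOfNorm e).comp K.orthogonalProjectionOnto
  have hV : V.comp (adjoint A) = adjoint T := by
    ext w
    have : K.orthogonalProjectionOnto (adjoint A w) = e w :=
      Submodule.orthogonalProjectionOnto_mem_subspace_eq_self (e w)
    simp only [V, comp_apply, this]
    exact LinearMap.extendOfNorm_eq he ⟨C, h⟩ w
  rintro _ ⟨x, rfl⟩
  exact ⟨adjoint V x, by simpa [adjoint_comp] using congrArg (fun S => adjoint S x) hV⟩

section Indefinite

variable {𝕜 E : Type*} [RCLike 𝕜] [NormedAddCommGroup E] [InnerProductSpace 𝕜 E]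

theorem ContinuousLinearMap.reApplyInnerSelf_add_of_apply_eq_zero {B : E →L[𝕜] E}
    (hB : (B : E →ₗ[𝕜] E).IsSymmetric) {e : E} (he : B e = 0) (v : E) :
    B.reApplyInnerSelf (e + v) = B.reApplyInnerSelf v := by
  simp only [reApplyInnerSelf_apply, map_add, he, zero_add, inner_add_right, hB.apply_clm v e,
    inner_zero_right]

theorem ContinuousLinearMap.exists_inner_apply_self_eq_zero_and_apply_ne_zero {B : E →L[𝕜] E}
    (hB : (B : E →ₗ[𝕜] E).IsSymmetric) {x y : E} (hx : 0 < B.reApplyInnerSelf x)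
    (hy : B.reApplyInnerSelf y < 0) : ∃ e, inner 𝕜 (B e) e = 0 ∧ B e ≠ 0 := by
  let f : ℝ → ℝ := fun t => B.reApplyInnerSelf (x + (t : 𝕜) • (y - x))
  have hf : Continuous f := B.reApplyInnerSelf_continuous.comp (by fun_prop)
  obtain ⟨t, -, ht⟩ : (0 : ℝ) ∈ f '' Set.Icc 0 1 :=
    intermediate_value_Icc' zero_le_one hf.continuousOn
      ⟨by simpa [f] using hy.le, by simpa [f] using hx.le⟩
  set e := x + (t : 𝕜) • (y - x)
  refine ⟨e, by rw [← hB.coe_reApplyInnerSelf_apply]; simp [← ht, f, e], fun he => ?_⟩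
  -- If `B e = 0`, the form on the line `e + s (y - x)` through `x` and `y` is
  -- `‖s‖² q(y - x)`, so it cannot take both signs.
  have key (s : 𝕜) :
      B.reApplyInnerSelf (e + s • (y - x)) = ‖s‖ ^ 2 * B.reApplyInnerSelf (y - x) := by
    rw [reApplyInnerSelf_add_of_apply_eq_zero hB he, reApplyInnerSelf_smul]
  have hx' := key (-t)
  have hy' := key (1 - t)
  rw [show e + (-(t : 𝕜)) • (y - x) = x by module] at hx'
  rw [show e + (1 - (t : 𝕜)) • (y - x) = y by module] at hy'
  have hv : 0 < B.reApplyInnerSelf (y - x) := pos_of_mul_pos_right (hx' ▸ hx) (sq_nonneg _)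
  nlinarith [sq_nonneg ‖1 - (t : 𝕜)‖]

end Indefinite

theorem ContinuousLinearMap.sqrt_mul_adjoint_mul_self (T : H →L[ℂ] H) :
    CFC.sqrt (T * adjoint T) * CFC.sqrt (T * adjoint T) = T * adjoint T :=
  CFC.sqrt_mul_sqrt_self _ (by simpa only [star_eq_adjoint] using mul_star_self_nonneg T)

theorem ContinuousLinearMap.range_le_range_sqrt_mul_adjoint (T : H →L[ℂ] H) :
    LinearMap.range (T : H →ₗ[ℂ] H) ≤
      LinearMap.range ((CFC.sqrt (T * adjoint T) : H →L[ℂ] H) : H →ₗ[ℂ] H) := by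
  have hA : IsSelfAdjoint (CFC.sqrt (T * adjoint T)) := .of_nonneg (CFC.sqrt_nonneg _)
  refine range_le_range_of_norm_adjoint_apply_le 1 fun w => le_of_eq ?_
  rw [one_mul, ← sq_eq_sq₀ (norm_nonneg _) (norm_nonneg _), apply_norm_sq_eq_inner_adjoint_left,
    apply_norm_sq_eq_inner_adjoint_left, adjoint_adjoint, adjoint_adjoint, hA.adjoint_eq,
    ← mul_def, ← mul_def, sqrt_mul_adjoint_mul_self]

theorem isSelfAdjoint_projL (S : Submodule ℂ H) [S.HasOrthogonalProjection] :
    IsSelfAdjoint (projL S) :=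
  isSelfAdjoint_starProjection S

theorem isWeaklyComplementable_of_isPositive {B : H →L[ℂ] H} (hB : B.IsPositive)
    (S : Submodule ℂ H) [S.HasOrthogonalProjection] : IsWeaklyComplementable B S := by
  set P := projL S
  set C := CFC.sqrt B
  have hC : IsSelfAdjoint C := .of_nonneg (CFC.sqrt_nonneg _)
  have hCC : C * C = B := CFC.sqrt_mul_sqrt_self B ((nonneg_iff_isPositive B).mpr hB)
  have ha : blockA B S = P * C * adjoint (P * C) := by
    rw [← star_eq_adjoint, star_mul, hC.star_eq, (isSelfAdjoint_projL S).star_eq, blockA, ← hCC]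
    noncomm_ring
  have hb : blockB B S = P * C * (C * (1 - P)) := by
    rw [blockB, ← hCC]
    noncomm_ring
  have ha_sa : IsSelfAdjoint (blockA B S) := by
    simpa only [ha, star_eq_adjoint] using IsSelfAdjoint.mul_star_self (P * C)
  have hm := sqrt_mul_adjoint_mul_self (P * C)
  rw [← ha] at hm
  refine ⟨CFC.sqrt (blockA B S), ⟨(nonneg_iff_isPositive _).mp (CFC.sqrt_nonneg _), ?_⟩, ?_⟩
  · rw [ha_sa.adjoint_eq, pow_succ, pow_succ, pow_two, mul_assoc, hm]
  · rw [hb, ha]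
    exact (LinearMap.range_comp_le_range _ _).trans (range_le_range_sqrt_mul_adjoint _)

theorem IsWeaklyComplementable.neg {B : H →L[ℂ] H} {S : Submodule ℂ H}
    [S.HasOrthogonalProjection] (h : IsWeaklyComplementable B S) :
    IsWeaklyComplementable (-B) S := by
  obtain ⟨m, ⟨hm, hm4⟩, hrange⟩ := h
  have ha : blockA (-B) S = -blockA B S := by simp only [blockA, mul_neg, neg_mul]
  have hb : blockB (-B) S = -blockB B S := by simp only [blockB, mul_neg, neg_mul]
  refine ⟨m, ⟨hm, ?_⟩, ?_⟩
  · rw [hm4, ha, map_neg, neg_mul_neg]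
  · rwa [hb, toLinearMap_neg, LinearMap.range_neg]

theorem IsWeaklyComplementable.blockB_eq_zero {B : H →L[ℂ] H} {S : Submodule ℂ H}
    [S.HasOrthogonalProjection] (h : IsWeaklyComplementable B S) (ha : blockA B S = 0) :
    blockB B S = 0 := by
  obtain ⟨m, ⟨hm, hm4⟩, hrange⟩ := h
  rw [ha, mul_zero] at hm4
  rw [hm.isSelfAdjoint.eq_zero_of_pow_two_pow_eq_zero 2 hm4, toLinearMap_zero,
    LinearMap.range_zero, le_bot_iff, LinearMap.range_eq_bot, ← toLinearMap_zero] at hrange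
  exact coe_injective hrange

theorem adjoint_blockB {B : H →L[ℂ] H} (hB : IsSelfAdjoint B) (S : Submodule ℂ H)
    [S.HasOrthogonalProjection] : adjoint (blockB B S) = (1 - projL S) * B * projL S := by
  rw [blockB, ← star_eq_adjoint, star_mul, star_mul, star_sub, star_one,
    (isSelfAdjoint_projL S).star_eq, hB.star_eq, mul_assoc]

theorem IsWeaklyComplementable.apply_eq_zero_of_inner_apply_self_eq_zero {B : H →L[ℂ] H}
    (hB : IsSelfAdjoint B) {e : H} (he : inner ℂ (B e) e = 0)
    (h : IsWeaklyComplementable B (ℂ ∙ e)) : B e = 0 := by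
  have hPe : projL (ℂ ∙ e) e = e :=
    Submodule.starProjection_eq_self_iff.mpr (Submodule.mem_span_singleton_self e)
  have hPBe : projL (ℂ ∙ e) (B e) = 0 :=
    (Submodule.starProjection_apply_eq_zero_iff _).mpr
      (Submodule.mem_orthogonal_singleton_iff_inner_left.mpr he)
  have ha : blockA B (ℂ ∙ e) = 0 := by
    ext z
    obtain ⟨c, hc⟩ : ∃ c : ℂ, c • e = projL (ℂ ∙ e) z :=
      Submodule.mem_span_singleton.mp ((ℂ ∙ e).starProjection_apply_mem z)
    change projL (ℂ ∙ e) (B (projL (ℂ ∙ e) z)) = 0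
    rw [← hc, map_smul, map_smul, hPBe, smul_zero]
  simpa [adjoint_blockB hB, hPe, hPBe] using
    congrArg (fun T => adjoint T e) (h.blockB_eq_zero ha)

/-- A bounded selfadjoint operator `B` is `S`-weakly complementable for every closed
subspace `S` of `H` if and only if `B` is semidefinite. -/
theorem stmt_0 (B : H →L[ℂ] H) (hB : IsSelfAdjoint B) :
    (∀ (S : Submodule ℂ H) [CompleteSpace S], IsWeaklyComplementable B S) ↔
      (B.IsPositive ∨ (-B).IsPositive) := by
  refine ⟨fun h => ?_, ?_⟩
  · by_contra hsemi
    obtain ⟨hnpos, hnneg⟩ := not_or.mp hsemi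
    obtain ⟨y, hy⟩ : ∃ y, B.reApplyInnerSelf y < 0 := by
      simpa [isPositive_def', hB] using hnpos
    obtain ⟨x, hx⟩ : ∃ x, 0 < B.reApplyInnerSelf x := by
      simpa [isPositive_def', hB.neg, reApplyInnerSelf_apply] using hnneg
    obtain ⟨e, he, hBe⟩ :=
      exists_inner_apply_self_eq_zero_and_apply_ne_zero hB.isSymmetric hx hy
    exact hBe ((h (ℂ ∙ e)).apply_eq_zero_of_inner_apply_self_eq_zero hB he)
  · rintro (hpos | hneg) S _
    · exact isWeaklyComplementable_of_isPositive hpos S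
    · simpa using (isWeaklyComplementable_of_isPositive hneg S).neg
end
end

section
/- Let H and K be complex Hilbert spaces with signature operators J ∈ L(H) and J_K ∈ L(K) (selfadjoint involutions). Let W ∈ L(H) satisfy (JW)* = JW, and let D ∈ L(K,H) be injective with W = DD^#, where D^# := J_K D* J. Let S be a closed subspace of H and assume W is S-complementable in the Krein sense: H = S + W⁻¹(J(S^⊥)). Set M := closure(D^#(S)) ⊆ K and M^{[⊥]} := J_K(M^⊥). Then: M ∩ M^{[⊥]} = {0}; range(D^#) ⊆ M + M^{[⊥]}; the map T sending x ∈ H to the M-component of D^#x in the decomposition M ∔ M^{[⊥]} is a bounded operator and satisfies T = D^#Q for any bounded idempotent Q with range(Q) = S and WQ = (JQ*J)W; consequently D∘(D^# − T) = W(I − Q), i.e., W_{/[S]} = D(I − P_{M // M^{[⊥]}})D^# where P_{M // M^{[⊥]}} is the projection onto M along M^{[⊥]} defined on M ∔ M^{[⊥]}. -/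
open ContinuousLinearMap

noncomputable section

variable {H : Type*} [NormedAddCommGroup H] [InnerProductSpace ℂ H] [CompleteSpace H]

/-! The identity `⟪D^# x, J_K u⟫ = ⟪x, J D u⟫` shows that `u ∈ M^{[⊥]}` iff `J D u ⊥ S`.
Complementability writes `x = s + z` with `W z ∈ J(Sᗮ)`, so `D^# x = D^# s + D^# z ∈ M + M^{[⊥]}`.
If `u ∈ M ∩ M^{[⊥]}`, then `J_K u` is orthogonal to `M + M^{[⊥]} ⊇ range D^#`, hence `J D u = 0`
and `u = 0` since `D` is injective. The `M`-component of `D^#` is then linear with closed graph,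
so bounded. For `Q ∈ P(W,S)` the identity `Q⋆ J W (1 - Q) = 0` puts `D^# (1 - Q) x` in
`M^{[⊥]}`, and uniqueness of the decomposition gives `T = D^# Q`. -/

open scoped InnerProductSpace

namespace Submodule

variable {R E F : Type*} [Ring R] [AddCommGroup E] [Module R E] [AddCommGroup F] [Module R F]

theorem eq_of_mem_of_sub_mem_of_disjoint {M N : Submodule R F} (hMN : Disjoint M N) {v m₁ m₂ : F}
    (hm₁ : m₁ ∈ M) (hm₂ : m₂ ∈ M) (hn₁ : v - m₁ ∈ N) (hn₂ : v - m₂ ∈ N) : m₁ = m₂ := by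
  have h : m₁ - m₂ ∈ M ⊓ N := ⟨M.sub_mem hm₁ hm₂, by simpa using N.sub_mem hn₂ hn₁⟩
  rwa [hMN.eq_bot, mem_bot, sub_eq_zero] at h

theorem exists_linearMap_mem_and_sub_mem {M N : Submodule R F} (hMN : Disjoint M N)
    (A : E →ₗ[R] F) (hA : LinearMap.range A ≤ M ⊔ N) :
    ∃ T : E →ₗ[R] F, ∀ x, T x ∈ M ∧ A x - T x ∈ N := by
  have hdecomp : ∀ x, ∃ m ∈ M, A x - m ∈ N := fun x => by
    obtain ⟨m, hm, n, hn, hmn⟩ := mem_sup.mp (hA ⟨x, rfl⟩)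
    exact ⟨m, hm, by rwa [← hmn, add_sub_cancel_left]⟩
  choose T hTM hTN using hdecomp
  have hT_unique : ∀ x m, m ∈ M → A x - m ∈ N → T x = m := fun x _ hm hn =>
    eq_of_mem_of_sub_mem_of_disjoint hMN (hTM x) hm (hTN x) hn
  refine ⟨{ toFun := T, map_add' := fun x y => ?_, map_smul' := fun c x => ?_ },
    fun x => ⟨hTM x, hTN x⟩⟩
  · refine hT_unique _ _ (M.add_mem (hTM x) (hTM y)) ?_
    rw [map_add, add_sub_add_comm]
    exact N.add_mem (hTN x) (hTN y)
  · refine hT_unique _ _ (M.smul_mem c (hTM x)) ?_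
    rw [map_smul, RingHom.id_apply, ← smul_sub]
    exact N.smul_mem c (hTN x)

theorem exists_continuousLinearMap_mem_and_sub_mem {𝕜 E F : Type*} [NontriviallyNormedField 𝕜]
    [NormedAddCommGroup E] [NormedSpace 𝕜 E] [CompleteSpace E]
    [NormedAddCommGroup F] [NormedSpace 𝕜 F] [CompleteSpace F]
    {M N : Submodule 𝕜 F} (hM : IsClosed (M : Set F)) (hN : IsClosed (N : Set F))
    (hMN : Disjoint M N) (A : E →L[𝕜] F) (hA : LinearMap.range (A : E →ₗ[𝕜] F) ≤ M ⊔ N) :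
    ∃ T : E →L[𝕜] F, ∀ x, T x ∈ M ∧ A x - T x ∈ N := by
  obtain ⟨T, hT⟩ := exists_linearMap_mem_and_sub_mem hMN (A : E →ₗ[𝕜] F) hA
  have hgraph : (T.graph : Set (E × F)) = {p | p.2 ∈ M ∧ A p.1 - p.2 ∈ N} := by
    ext ⟨x, y⟩
    simp only [SetLike.mem_coe, LinearMap.mem_graph_iff, Set.mem_ofPred_eq]
    constructor
    · rintro rfl
      exact hT x
    · rintro ⟨hy, hxy⟩
      exact eq_of_mem_of_sub_mem_of_disjoint hMN hy (hT x).1 hxy (hT x).2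
  have hclosed : IsClosed (T.graph : Set (E × F)) := by
    rw [hgraph]
    exact (hM.preimage continuous_snd).inter
      (hN.preimage ((A.continuous.comp continuous_fst).sub continuous_snd))
  exact ⟨ContinuousLinearMap.ofIsClosedGraph hclosed, hT⟩

end Submodule

theorem ContinuousLinearMap.apply_apply_of_mul_self_eq_one {R E : Type*} [Semiring R]
    [TopologicalSpace E] [AddCommMonoid E] [Module R E] {A : E →L[R] E} (hA : A * A = 1)
    (x : E) : A (A x) = x :=
  congr($hA x)

section Krein

variable {K : Type*} [NormedAddCommGroup K] [InnerProductSpace ℂ K]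
  {J : H →L[ℂ] H} {JK : K →L[ℂ] K}

def kreinOrthogonal (JK : K →L[ℂ] K) (M : Submodule ℂ K) : Submodule ℂ K :=
  Mᗮ.map (JK : K →ₗ[ℂ] K)

theorem mem_kreinOrthogonal_iff (hJK2 : JK * JK = 1) {M : Submodule ℂ K} {u : K} :
    u ∈ kreinOrthogonal JK M ↔ JK u ∈ Mᗮ := by
  constructor
  · rintro ⟨v, hv, rfl⟩
    rwa [ContinuousLinearMap.coe_coe, apply_apply_of_mul_self_eq_one hJK2]
  · exact fun h => ⟨JK u, h, apply_apply_of_mul_self_eq_one hJK2 u⟩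

theorem isClosed_kreinOrthogonal (hJK2 : JK * JK = 1) (M : Submodule ℂ K) :
    IsClosed (kreinOrthogonal JK M : Set K) := by
  have h : (kreinOrthogonal JK M : Set K) = JK ⁻¹' Mᗮ :=
    Set.ext fun _ => mem_kreinOrthogonal_iff hJK2
  rw [h]
  exact M.isClosed_orthogonal.preimage JK.continuous

variable [CompleteSpace K]

def kreinAdjoint (J : H →L[ℂ] H) (JK : K →L[ℂ] K) (D : K →L[ℂ] H) : H →L[ℂ] K :=
  JK ∘L (adjoint D ∘L J)

theorem inner_signature_eq_zero_of_mem_inf_of_mem_sup (hJK : IsSelfAdjoint JK)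
    (hJK2 : JK * JK = 1) {M : Submodule ℂ K} {u v : K} (hu : u ∈ M ⊓ kreinOrthogonal JK M)
    (hv : v ∈ M ⊔ kreinOrthogonal JK M) : ⟪v, JK u⟫_ℂ = 0 := by
  obtain ⟨m, hm, w, hw, rfl⟩ := Submodule.mem_sup.mp hv
  have hw' : ⟪w, JK u⟫_ℂ = 0 := by
    rw [← hJK.adjoint_eq, adjoint_inner_right, ← inner_conj_symm,
      Submodule.inner_right_of_mem_orthogonal hu.1 ((mem_kreinOrthogonal_iff hJK2).mp hw), map_zero]
  rw [inner_add_left, Submodule.inner_right_of_mem_orthogonal hm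
    ((mem_kreinOrthogonal_iff hJK2).mp hu.2), hw', add_zero]

theorem inner_kreinAdjoint_apply_signature (hJ : IsSelfAdjoint J) (hJK : IsSelfAdjoint JK)
    (hJK2 : JK * JK = 1) (D : K →L[ℂ] H) (x : H) (u : K) :
    ⟪kreinAdjoint J JK D x, JK u⟫_ℂ = ⟪x, J (D u)⟫_ℂ := by
  calc ⟪JK (adjoint D (J x)), JK u⟫_ℂ = ⟪adjoint D (J x), u⟫_ℂ := by
        rw [← adjoint_inner_right, hJK.adjoint_eq, apply_apply_of_mul_self_eq_one hJK2]
    _ = ⟪x, J (D u)⟫_ℂ := by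
        rw [adjoint_inner_left, ← adjoint_inner_right, hJ.adjoint_eq]

theorem disjoint_kreinOrthogonal_of_range_le_sup (hJ : IsSelfAdjoint J) (hJ2 : J * J = 1)
    (hJK : IsSelfAdjoint JK) (hJK2 : JK * JK = 1) {D : K →L[ℂ] H} (hD : Function.Injective D)
    {M : Submodule ℂ K}
    (hrange : LinearMap.range (kreinAdjoint J JK D : H →ₗ[ℂ] K) ≤ M ⊔ kreinOrthogonal JK M) :
    Disjoint M (kreinOrthogonal JK M) := by
  refine disjoint_iff.mpr (eq_bot_iff.mpr fun u hu => ?_)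
  have hJDu : J (D u) = 0 := by
    rw [← inner_self_eq_zero (𝕜 := ℂ), ← inner_kreinAdjoint_apply_signature hJ hJK hJK2]
    exact inner_signature_eq_zero_of_mem_inf_of_mem_sup hJK hJK2 hu (hrange ⟨_, rfl⟩)
  have hDu : D u = 0 := by
    rw [← apply_apply_of_mul_self_eq_one hJ2 (D u), hJDu, map_zero]
  exact (Submodule.mem_bot ℂ).mpr (hD (hDu.trans (map_zero D).symm))

theorem mem_kreinOrthogonal_closure_map_kreinAdjoint_iff (hJ : IsSelfAdjoint J)
    (hJK : IsSelfAdjoint JK) (hJK2 : JK * JK = 1) (D : K →L[ℂ] H) (S : Submodule ℂ H) (u : K) :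
    u ∈ kreinOrthogonal JK (S.map (kreinAdjoint J JK D : H →ₗ[ℂ] K)).topologicalClosure ↔
      J (D u) ∈ Sᗮ := by
  rw [mem_kreinOrthogonal_iff hJK2, Submodule.orthogonal_closure, Submodule.mem_orthogonal,
    Submodule.mem_orthogonal]
  constructor
  · intro h x hx
    rw [← inner_kreinAdjoint_apply_signature hJ hJK hJK2]
    exact h _ ⟨x, hx, rfl⟩
  · rintro h _ ⟨x, hx, rfl⟩
    exact (inner_kreinAdjoint_apply_signature hJ hJK hJK2 D x u).trans (h x hx)

theorem range_kreinAdjoint_le_sup (hJ : IsSelfAdjoint J) (hJ2 : J * J = 1)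
    (hJK : IsSelfAdjoint JK) (hJK2 : JK * JK = 1) {D : K →L[ℂ] H} {S : Submodule ℂ H}
    (hc : S ⊔ (Sᗮ.map (J : H →ₗ[ℂ] H)).comap (D ∘L kreinAdjoint J JK D : H →ₗ[ℂ] H) = ⊤) :
    LinearMap.range (kreinAdjoint J JK D : H →ₗ[ℂ] K) ≤
      (S.map (kreinAdjoint J JK D : H →ₗ[ℂ] K)).topologicalClosure ⊔
        kreinOrthogonal JK (S.map (kreinAdjoint J JK D : H →ₗ[ℂ] K)).topologicalClosure := by
  rintro _ ⟨x, rfl⟩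
  obtain ⟨s, hs, z, ⟨v, hv, hvz⟩, rfl⟩ := Submodule.mem_sup.mp (hc ▸ Submodule.mem_top : x ∈ _)
  rw [map_add]
  refine Submodule.add_mem_sup (Submodule.le_topologicalClosure _ ⟨s, hs, rfl⟩) ?_
  rw [mem_kreinOrthogonal_closure_map_kreinAdjoint_iff hJ hJK hJK2]
  have hDz : D (kreinAdjoint J JK D z) = J v := hvz.symm
  change J (D (kreinAdjoint J JK D z)) ∈ Sᗮ
  rwa [hDz, apply_apply_of_mul_self_eq_one hJ2]

end Krein

theorem signature_mul_mul_one_sub_apply_mem_orthogonal_range {J W Q : H →L[ℂ] H}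
    (hJ2 : J * J = 1) (hQ : Q * Q = Q) (hQW : W * Q = J * adjoint Q * J * W) (x : H) :
    (J * W * (1 - Q)) x ∈ (LinearMap.range (Q : H →ₗ[ℂ] H))ᗮ := by
  have hJWQ : J * W * Q = adjoint Q * (J * W) := by
    rw [mul_assoc, hQW, ← mul_assoc, ← mul_assoc, ← mul_assoc, hJ2, one_mul, mul_assoc]
  have hQadj : adjoint Q * adjoint Q = adjoint Q := by
    rw [← star_eq_adjoint, ← star_mul, hQ]
  have hzero : adjoint Q * (J * W * (1 - Q)) = 0 := by
    rw [mul_sub, mul_one, hJWQ, mul_sub, ← mul_assoc (adjoint Q) (adjoint Q), hQadj, sub_self]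
  rw [Submodule.mem_orthogonal]
  rintro _ ⟨y, rfl⟩
  rw [coe_coe, ← adjoint_inner_right]
  exact congr(⟪y, $hzero x⟫_ℂ).trans (inner_zero_right y)

theorem stmt_19_general {K : Type*} [NormedAddCommGroup K] [InnerProductSpace ℂ K] [CompleteSpace K]
    (J : H →L[ℂ] H) (JK : K →L[ℂ] K)
    (hJ : IsSelfAdjoint J) (hJ2 : J * J = 1)
    (hJK : IsSelfAdjoint JK) (hJK2 : JK * JK = 1)
    (W : H →L[ℂ] H)
    (D : K →L[ℂ] H) (hD : Function.Injective D)
    (Dsharp : H →L[ℂ] K) (hDs : Dsharp = JK ∘L ((adjoint D) ∘L J))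
    (hWD : W = D ∘L Dsharp)
    (S : Submodule ℂ H)
    (hc : S ⊔ (Sᗮ.map (J : H →ₗ[ℂ] H)).comap (W : H →ₗ[ℂ] H) = ⊤)
    (M : Submodule ℂ K) (hM : M = (S.map (Dsharp : H →ₗ[ℂ] K)).topologicalClosure)
    (Mp : Submodule ℂ K) (hMp : Mp = Mᗮ.map (JK : K →ₗ[ℂ] K)) :
    M ⊓ Mp = ⊥ ∧
    LinearMap.range (Dsharp : H →ₗ[ℂ] K) ≤ M ⊔ Mp ∧
    ∃ T : H →L[ℂ] K,
      (∀ x : H, T x ∈ M ∧ Dsharp x - T x ∈ Mp) ∧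
      ∀ Q : H →L[ℂ] H, Q * Q = Q → LinearMap.range (Q : H →ₗ[ℂ] H) = S →
        W * Q = (J * adjoint Q * J) * W →
        T = Dsharp ∘L Q ∧ D ∘L (Dsharp - T) = W * (1 - Q) := by
  obtain rfl : Dsharp = kreinAdjoint J JK D := hDs
  obtain rfl : Mp = kreinOrthogonal JK M := hMp
  subst hWD hM
  have hrange := range_kreinAdjoint_le_sup hJ hJ2 hJK hJK2 hc
  have hdisj := disjoint_kreinOrthogonal_of_range_le_sup hJ hJ2 hJK hJK2 hD hrange
  obtain ⟨T, hT⟩ := Submodule.exists_continuousLinearMap_mem_and_sub_mem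
    (Submodule.isClosed_topologicalClosure _) (isClosed_kreinOrthogonal hJK2 _) hdisj _ hrange
  refine ⟨hdisj.eq_bot, hrange, T, hT, fun Q hQ hQS hQW => ?_⟩
  have hTQ : T = kreinAdjoint J JK D ∘L Q := by
    ext x
    refine Submodule.eq_of_mem_of_sub_mem_of_disjoint hdisj (hT x).1
      (Submodule.le_topologicalClosure _ ⟨Q x, hQS ▸ ⟨x, rfl⟩, rfl⟩) (hT x).2 ?_
    rw [comp_apply, ← map_sub, mem_kreinOrthogonal_closure_map_kreinAdjoint_iff hJ hJK hJK2,
      ← hQS]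
    exact signature_mul_mul_one_sub_apply_mem_orthogonal_range hJ2 hQ hQW x
  refine ⟨hTQ, ?_⟩
  rw [hTQ, comp_sub, mul_sub, mul_one]
  rfl

/-- For a Krein space `S`-complementable `W = DD^#`: with `M = closure(D^#(S))`, one has
`M ∩ M^{[⊥]} = 0`, `range D^# ⊆ M + M^{[⊥]}`, the `M`-component map `T` of `D^#` is bounded
with `T = D^#Q` for any projection `Q ∈ P(W,S)`, and
`W_{/[S]} = D(I - P_{M ∕∕ M^{[⊥]}})D^# = W(I - Q)`. -/
theorem stmt_19 {K : Type*} [NormedAddCommGroup K] [InnerProductSpace ℂ K] [CompleteSpace K]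
    (J : H →L[ℂ] H) (JK : K →L[ℂ] K)
    (hJ : IsSelfAdjoint J) (hJ2 : J * J = 1)
    (hJK : IsSelfAdjoint JK) (hJK2 : JK * JK = 1)
    (W : H →L[ℂ] H) (hW : IsSelfAdjoint (J * W))
    (D : K →L[ℂ] H) (hD : Function.Injective D)
    (Dsharp : H →L[ℂ] K) (hDs : Dsharp = JK ∘L ((adjoint D) ∘L J))
    (hWD : W = D ∘L Dsharp)
    (S : Submodule ℂ H) [CompleteSpace S]
    (hc : S ⊔ (Sᗮ.map (J : H →ₗ[ℂ] H)).comap (W : H →ₗ[ℂ] H) = ⊤)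
    (M : Submodule ℂ K) (hM : M = (S.map (Dsharp : H →ₗ[ℂ] K)).topologicalClosure)
    (Mp : Submodule ℂ K) (hMp : Mp = Mᗮ.map (JK : K →ₗ[ℂ] K)) :
    M ⊓ Mp = ⊥ ∧
    LinearMap.range (Dsharp : H →ₗ[ℂ] K) ≤ M ⊔ Mp ∧
    ∃ T : H →L[ℂ] K,
      (∀ x : H, T x ∈ M ∧ Dsharp x - T x ∈ Mp) ∧
      ∀ Q : H →L[ℂ] H, Q * Q = Q → LinearMap.range (Q : H →ₗ[ℂ] H) = S →
        W * Q = (J * adjoint Q * J) * W →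
        T = Dsharp ∘L Q ∧ D ∘L (Dsharp - T) = W * (1 - Q) :=
  stmt_19_general J JK hJ hJ2 hJK hJK2 W D hD Dsharp hDs hWD S hc M hM Mp hMp
end
end
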